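/- Let θ ∈ ℝⁿ with ‖θ‖ ≥ θ_min > 0, let a* = a*(θ) be the unique maximizer of ⟨θ, ·⟩ over 𝒜 with ∇g(a*) = ω θ, ω > 0, and assume: λ^Δ_min·I ⪯ ∇²g(y) for all y in the ball B(a*, m'); ‖∇g(a*)‖ ≤ ∇_max; ‖a‖ ≤ a_max for all a ∈ 𝒜; and there are m'' ∈ (0, m') and c_min > 0 such that r_θ(a) := ⟨θ, a* − a⟩ ≥ c_min whenever a ∈ 𝒜 and ‖a − a*‖ > m''. Set c₃ = min{ θ_min λ^Δ_min/(2∇_max), c_min/(4 a_max²) }. Then for every a ∈ 𝒜: r_θ(a) ≥ c₃ · ‖a*(θ) − a‖². -/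

import Mathlib

/-!
Near `a*`, integrating the Hessian lower bound `λ` twice along the segment from `a*` to `a` gives
`g a ≥ g a* + ⟪∇g a*, a - a*⟫ + λ/2 ‖a - a*‖²`. Since `g a ≤ 0 = g a*` and `∇g a* = ω θ` with
`ω θmin ≤ ω ‖θ‖ ≤ ∇max`, this yields `r_θ(a) ≥ λ/(2ω) ‖a - a*‖² ≥ θmin λ/(2∇max) ‖a - a*‖²`.
Far from `a*` the regret is at least `c_min`, which dominates `c_min/(4 a_max²) ‖a - a*‖²`
because `‖a - a*‖ ≤ 2 a_max`.
-/

open RealInnerProductSpace Set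

theorem ContDiff.gradient {F : Type*} [NormedAddCommGroup F] [InnerProductSpace ℝ F]
    [CompleteSpace F] {f : F → ℝ} {n : WithTop ℕ∞} (hf : ContDiff ℝ (n + 1) f) :
    ContDiff ℝ n (gradient f) :=
  (InnerProductSpace.toDual ℝ F).symm.contDiff.comp (hf.fderiv_right le_rfl)

theorem add_deriv_add_half_le_of_le_deriv2 {φ φ' φ'' : ℝ → ℝ} {L : ℝ}
    (hφ : ∀ t, HasDerivAt φ (φ' t) t) (hφ' : ∀ t, HasDerivAt φ' (φ'' t) t)
    (hL : ∀ t ∈ Ioo (0 : ℝ) 1, L ≤ φ'' t) :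
    φ 0 + φ' 0 + L / 2 ≤ φ 1 := by
  have hslope : ∀ t ∈ Icc (0 : ℝ) 1, φ' 0 + L * t ≤ φ' t := by
    intro t ht
    have := (convex_Icc (0 : ℝ) 1).mul_sub_le_image_sub_of_le_deriv
      (fun s _ => (hφ' s).continuousAt.continuousWithinAt)
      (fun s _ => (hφ' s).differentiableAt.differentiableWithinAt)
      (fun s hs => by rw [interior_Icc] at hs; exact (hφ' s).deriv ▸ hL s hs)
      0 (left_mem_Icc.2 zero_le_one) t ht ht.1
    linarith
  have hΦ : ∀ t, HasDerivAt (fun s => φ s - L / 2 * s ^ 2) (φ' t - L * t) t := fun t =>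
    ((hφ t).fun_sub ((hasDerivAt_pow 2 t).const_mul (L / 2))).congr_deriv (by ring)
  have := (convex_Icc (0 : ℝ) 1).mul_sub_le_image_sub_of_le_deriv
    (fun s _ => (hΦ s).continuousAt.continuousWithinAt)
    (fun s _ => (hΦ s).differentiableAt.differentiableWithinAt) (C := φ' 0)
    (fun s hs => by
      rw [interior_Icc] at hs
      rw [(hΦ s).deriv]
      linarith [hslope s (Ioo_subset_Icc_self hs)])
    0 (left_mem_Icc.2 zero_le_one) 1 (right_mem_Icc.2 zero_le_one) zero_le_one
  linarith

theorem add_inner_gradient_add_half_le {F : Type*} [NormedAddCommGroup F]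
    [InnerProductSpace ℝ F] [CompleteSpace F] {f : F → ℝ} (hf : ContDiff ℝ 2 f) {x v : F} {L : ℝ}
    (hL : ∀ t ∈ Ioo (0 : ℝ) 1, L ≤ ⟪fderiv ℝ (gradient f) (x + t • v) v, v⟫) :
    f x + ⟪gradient f x, v⟫ + L / 2 ≤ f (x + v) := by
  have hγ : ∀ t : ℝ, HasDerivAt (fun s : ℝ => x + s • v) v t := fun t => by
    simpa using ((hasDerivAt_id t).smul_const v).const_add x
  have hf₁ : Differentiable ℝ f := hf.differentiable (by norm_num)
  have hgrad : Differentiable ℝ (gradient f) :=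
    (ContDiff.gradient (n := 1) hf).differentiable one_ne_zero
  have hφ : ∀ t : ℝ, HasDerivAt (fun s => f (x + s • v)) ⟪gradient f (x + t • v), v⟫ t :=
    fun t => by
      rw [inner_gradient_left]
      exact (hf₁ _).hasFDerivAt.comp_hasDerivAt t (hγ t)
  have hφ' : ∀ t : ℝ, HasDerivAt (fun s => ⟪gradient f (x + s • v), v⟫)
      ⟪fderiv ℝ (gradient f) (x + t • v) v, v⟫ t := fun t => by
    simpa using ((hgrad _).hasFDerivAt.comp_hasDerivAt t (hγ t)).inner ℝ (hasDerivAt_const t v)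
  simpa using add_deriv_add_half_le_of_le_deriv2 hφ hφ' hL

theorem half_mul_sq_le_inner_gradient_sub {F : Type*} [NormedAddCommGroup F]
    [InnerProductSpace ℝ F] [CompleteSpace F] {g : F → ℝ} (hg : ContDiff ℝ 2 g) {x a : F}
    {lam ρ : ℝ} (hH : ∀ y, ‖y - x‖ ≤ ρ → ∀ v, lam * ‖v‖ ^ 2 ≤ ⟪fderiv ℝ (gradient g) y v, v⟫)
    (hax : ‖a - x‖ ≤ ρ) (hgx : g x = 0) (hga : g a ≤ 0) :
    lam / 2 * ‖a - x‖ ^ 2 ≤ ⟪gradient g x, x - a⟫ := by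
  have hseg : ∀ t ∈ Ioo (0 : ℝ) 1,
      lam * ‖a - x‖ ^ 2 ≤ ⟪fderiv ℝ (gradient g) (x + t • (a - x)) (a - x), a - x⟫ := by
    intro t ht
    refine hH _ ?_ _
    rw [add_sub_cancel_left, norm_smul, Real.norm_of_nonneg ht.1.le]
    nlinarith [norm_nonneg (a - x), ht.2]
  have htaylor := add_inner_gradient_add_half_le hg hseg
  rw [add_sub_cancel, hgx] at htaylor
  rw [← neg_sub a x, inner_neg_right]
  linarith

theorem regret_quadratic_global_lower_bound_general {n : ℕ}
    (g : EuclideanSpace ℝ (Fin n) → ℝ) (hg : ContDiff ℝ 3 g)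
    (θ : EuclideanSpace ℝ (Fin n)) (θmin : ℝ) (hθmin : 0 < θmin) (hθlb : θmin ≤ ‖θ‖)
    (astar : EuclideanSpace ℝ (Fin n))
    (hmem : g astar ≤ 0)
    (hbdry : g astar = 0)
    (ω : ℝ) (hω : 0 < ω) (hgrad : gradient g astar = ω • θ)
    (m' gradmax lamΔmin amax : ℝ) (hgradmax : 0 < gradmax)
    (hlamΔmin : 0 < lamΔmin) (hamax : 0 < amax)
    (hHess : ∀ y : EuclideanSpace ℝ (Fin n), ‖y - astar‖ ≤ m' →
      ∀ v : EuclideanSpace ℝ (Fin n),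
        lamΔmin * ‖v‖ ^ 2 ≤ ⟪fderiv ℝ (gradient g) y v, v⟫)
    (hgradbnd : ‖gradient g astar‖ ≤ gradmax)
    (hanorm : ∀ a : EuclideanSpace ℝ (Fin n), g a ≤ 0 → ‖a‖ ≤ amax)
    (m'' cmin : ℝ) (hm'' : m'' < m') (hcmin : 0 < cmin)
    (hgap : ∀ a : EuclideanSpace ℝ (Fin n), g a ≤ 0 → m'' < ‖a - astar‖ →
      cmin ≤ ⟪θ, astar⟫ - ⟪θ, a⟫)
    (c₃ : ℝ) (hc₃ : c₃ = min (θmin * lamΔmin / (2 * gradmax)) (cmin / (4 * amax ^ 2))) :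
    ∀ a : EuclideanSpace ℝ (Fin n), g a ≤ 0 →
      c₃ * ‖astar - a‖ ^ 2 ≤ ⟪θ, astar⟫ - ⟪θ, a⟫ := by
  intro a ha
  have hc₃_nonneg : 0 ≤ c₃ := hc₃ ▸ le_min (by positivity) (by positivity)
  rcases lt_or_ge m'' ‖a - astar‖ with hfar | hnear
  · have hdist : ‖astar - a‖ ≤ 2 * amax := by
      linarith [norm_sub_le astar a, hanorm astar hmem, hanorm a ha]
    calc c₃ * ‖astar - a‖ ^ 2 ≤ cmin / (4 * amax ^ 2) * (2 * amax) ^ 2 := by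
          gcongr; exact hc₃ ▸ min_le_right _ _
      _ = cmin := by field_simp; ring
      _ ≤ _ := hgap a ha hfar
  · have hquad := half_mul_sq_le_inner_gradient_sub (hg.of_le (by norm_num)) hHess
      (hnear.trans hm''.le) hbdry ha
    rw [hgrad, real_inner_smul_left, inner_sub_right] at hquad
    rw [hgrad, norm_smul, Real.norm_of_nonneg hω.le] at hgradbnd
    have hωθ : ω * θmin ≤ gradmax := by nlinarith
    rw [norm_sub_rev]
    calc c₃ * ‖a - astar‖ ^ 2 ≤ θmin * lamΔmin / (2 * gradmax) * ‖a - astar‖ ^ 2 := by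
          gcongr; exact hc₃ ▸ min_le_left _ _
      _ ≤ lamΔmin / (2 * ω) * ‖a - astar‖ ^ 2 := by
          gcongr ?_ * _
          rw [div_le_div_iff₀ (by positivity) (by positivity)]
          nlinarith
      _ ≤ ⟪θ, astar⟫ - ⟪θ, a⟫ := by
          rw [div_mul_eq_mul_div, div_le_iff₀ (by positivity)]
          linarith

/-- global quadratic lower bound on instantaneous regret.
Under the stated curvature, gradient, boundedness and regret-gap hypotheses, the instantaneous
regret satisfies `r_θ(a) ≥ c₃ ‖a*(θ) − a‖²` for every action `a ∈ 𝒜 = {g ≤ 0}`, where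
`c₃ = min{θmin λΔmin/(2∇max), c_min/(4 a_max²)}`. -/
theorem regret_quadratic_global_lower_bound {n : ℕ}
    (g : EuclideanSpace ℝ (Fin n) → ℝ) (hg : ContDiff ℝ 3 g)
    (κ : ℝ) (hκ : 0 < κ) (hsc : StrongConvexOn Set.univ κ g)
    (hcompact : IsCompact {x : EuclideanSpace ℝ (Fin n) | g x ≤ 0})
    (θ : EuclideanSpace ℝ (Fin n)) (θmin : ℝ) (hθmin : 0 < θmin) (hθlb : θmin ≤ ‖θ‖)
    (astar : EuclideanSpace ℝ (Fin n))
    (hmem : g astar ≤ 0) (hmax : ∀ b, g b ≤ 0 → ⟪θ, b⟫ ≤ ⟪θ, astar⟫)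
    (huniq : ∀ a', (g a' ≤ 0 ∧ ∀ b, g b ≤ 0 → ⟪θ, b⟫ ≤ ⟪θ, a'⟫) → a' = astar)
    (hbdry : g astar = 0)
    (ω : ℝ) (hω : 0 < ω) (hgrad : gradient g astar = ω • θ)
    (m' gradmax lamΔmin amax : ℝ) (hm' : 0 < m') (hgradmax : 0 < gradmax)
    (hlamΔmin : 0 < lamΔmin) (hamax : 0 < amax)
    (hHess : ∀ y : EuclideanSpace ℝ (Fin n), ‖y - astar‖ ≤ m' →
      ∀ v : EuclideanSpace ℝ (Fin n),
        lamΔmin * ‖v‖ ^ 2 ≤ ⟪fderiv ℝ (gradient g) y v, v⟫)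
    (hgradbnd : ‖gradient g astar‖ ≤ gradmax)
    (hanorm : ∀ a : EuclideanSpace ℝ (Fin n), g a ≤ 0 → ‖a‖ ≤ amax)
    (m'' cmin : ℝ) (hm''0 : 0 < m'') (hm'' : m'' < m') (hcmin : 0 < cmin)
    (hgap : ∀ a : EuclideanSpace ℝ (Fin n), g a ≤ 0 → m'' < ‖a - astar‖ →
      cmin ≤ ⟪θ, astar⟫ - ⟪θ, a⟫)
    (c₃ : ℝ) (hc₃ : c₃ = min (θmin * lamΔmin / (2 * gradmax)) (cmin / (4 * amax ^ 2))) :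
    ∀ a : EuclideanSpace ℝ (Fin n), g a ≤ 0 →
      c₃ * ‖astar - a‖ ^ 2 ≤ ⟪θ, astar⟫ - ⟪θ, a⟫ :=
  regret_quadratic_global_lower_bound_general g hg θ θmin hθmin hθlb astar hmem hbdry ω hω hgrad m'
    gradmax lamΔmin amax hgradmax hlamΔmin hamax hHess hgradbnd hanorm m'' cmin hm'' hcmin hgap c₃
    hc₃
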